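/- Let η be a dimer covering of ℤ², k an integer, c a choice function, and T the shuffling map acting at time k with choice function c. Then for every face f that is even at time k, h_{T(η)}(f) − h_η(f) = ( H[η] + H[T(η)] − V[η] − V[T(η)] ) / 4, where for a dimer covering ξ, H[ξ] is the number of edges among the top and bottom boundary edges of f that are occupied by dimers of ξ, and V[ξ] is the number of edges among the left and right boundary edges of f occupied by dimers of ξ. -/

import Mathlib

/-- Vertices of the square lattice `ℤ²`. -/
abbrev Vtx := ℤ × ℤ

/-- An edge of `ℤ²`, encoded as its base vertex together with a direction:
`true` for the horizontal edge to `(+1,0)`, `false` for the vertical edge to `(0,+1)`. -/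
abbrev DEdge := Vtx × Bool

/-- The displacement of an edge of given direction. -/
def edir (b : Bool) : Vtx := if b then (1, 0) else (0, 1)

/-- A dimer covering (perfect matching) of `ℤ²`: every vertex belongs to exactly one edge. -/
def IsDimerCover (η : Set DEdge) : Prop :=
  ∀ v : Vtx, ∃! e : DEdge, e ∈ η ∧ (v = e.1 ∨ v = e.1 + edir e.2)

/-- The indicator `1_{e ∈ η}` as a real number. -/
noncomputable def dInd (η : Set DEdge) (e : DEdge) : ℝ :=
  Set.indicator η (fun _ => (1 : ℝ)) e

/-- `+1` if `m + k` is even, `-1` otherwise: at time `k` a vertex `(x₁,x₂)` is white iff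
`x₁ + x₂ + k` is even (the colors of the vertices are interchanged at each time step). -/
def sgnW (k m : ℤ) : ℝ := if (m + k) % 2 = 0 then 1 else -1

/-- Adjacency of faces: the face `g` is one of the four nearest neighbors of `f`. -/
def Adj (f g : ℤ × ℤ) : Prop :=
  g = (f.1 + 1, f.2) ∨ g = (f.1 - 1, f.2) ∨ g = (f.1, f.2 + 1) ∨ g = (f.1, f.2 - 1)

/-- The height increment `σ_e (1_{e∈η} − 1/4)` when stepping from face `f` to an adjacent
face `g` across their shared edge `e`, with the coloring at time `k`: `σ_e = +1` iff the
endpoint of `e` which is white at time `k` lies to the right of the direction of crossing. -/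
noncomputable def inc (k : ℤ) (η : Set DEdge) (f g : ℤ × ℤ) : ℝ :=
  if g = (f.1 + 1, f.2) then
    sgnW k (f.1 + 1 + f.2) * (dInd η ((f.1 + 1, f.2), false) - 1 / 4)
  else if g = (f.1 - 1, f.2) then
    sgnW k (f.1 + f.2 + 1) * (dInd η ((f.1, f.2), false) - 1 / 4)
  else if g = (f.1, f.2 + 1) then
    sgnW k (f.1 + f.2) * (dInd η ((f.1, f.2 + 1), true) - 1 / 4)
  else if g = (f.1, f.2 - 1) then
    sgnW k (f.1 + f.2) * (dInd η ((f.1, f.2), true) - 1 / 4)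
  else 0

/-- `h` is a height function for the dimer covering `η` at time `k`. -/
def IsHeightAt (k : ℤ) (η : Set DEdge) (h : ℤ × ℤ → ℝ) : Prop :=
  ∀ f g : ℤ × ℤ, Adj f g → h g - h f = inc k η f g

/-- Bottom edge of the face `f = (i,j)`. -/
def bE (f : ℤ × ℤ) : DEdge := ((f.1, f.2), true)
/-- Top edge of the face `f`. -/
def tE (f : ℤ × ℤ) : DEdge := ((f.1, f.2 + 1), true)
/-- Left edge of the face `f`. -/
def lE (f : ℤ × ℤ) : DEdge := ((f.1, f.2), false)
/-- Right edge of the face `f`. -/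
def rE (f : ℤ × ℤ) : DEdge := ((f.1 + 1, f.2), false)

/-- The four boundary edges of the face `f`. -/
def bdF (f : ℤ × ℤ) : Set DEdge := {bE f, tE f, lE f, rE f}

/-- The edge opposite to `e` on the boundary of the face `f`. -/
def oppE (f : ℤ × ℤ) (e : DEdge) : DEdge :=
  if e = bE f then tE f else if e = tE f then bE f else if e = lE f then rE f else lE f

/-- The face `f = (i,j)` is even at time `k` iff `i + j ≡ k (mod 2)`. -/
def IsEvenFace (k : ℤ) (f : ℤ × ℤ) : Prop := (f.1 + f.2) % 2 = k % 2

/-- The shuffling map acting at time `k` with choice function `c` (deletion, sliding and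
creation steps). -/
def shuffle (k : ℤ) (c : ℤ × ℤ → Bool) (η : Set DEdge) : Set DEdge :=
  { e | ∃ f : ℤ × ℤ, IsEvenFace k f ∧ e ∈ bdF f ∧
      ((η ∩ bdF f = ∅ ∧
          (if c f then e = tE f ∨ e = bE f else e = lE f ∨ e = rE f)) ∨
        (∃ e₀ : DEdge, η ∩ bdF f = {e₀} ∧ e = oppE f e₀)) }

/-- `H[ξ]` at the face `f`: number of dimers of `ξ` among the top and bottom boundary
edges of `f`. -/
noncomputable def Hcount (ξ : Set DEdge) (f : ℤ × ℤ) : ℝ := dInd ξ (tE f) + dInd ξ (bE f)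

/-- `V[ξ]` at the face `f`: number of dimers of `ξ` among the left and right boundary
edges of `f`. -/
noncomputable def Vcount (ξ : Set DEdge) (f : ℤ × ℤ) : ℝ := dInd ξ (lE f) + dInd ξ (rE f)

/-!
Across the bottom edge `e` of an even face `f` the face below is odd, and the colouring of the
vertices flips between times `k` and `k + 1`, so the two height increments across `e` have
opposite signs: `h' f - h f = 1_{e ∈ η} + 1_{e ∈ T η} - 1/2`. Locally, the shuffle deletes a
parallel pair, slides a single dimer to the opposite side, or creates a parallel pair; hence there
is an orientation such that each boundary edge of `f` of that orientation lies in exactly one of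
`η`, `T η`, and the other two boundary edges lie in neither. Both sides of the identity are then
`1/2` (horizontal) or `-1/2` (vertical).
-/

section Face

variable (f : ℤ × ℤ)

@[simp] lemma bE_mem_bdF : bE f ∈ bdF f := by simp [bdF]
@[simp] lemma tE_mem_bdF : tE f ∈ bdF f := by simp [bdF]
@[simp] lemma lE_mem_bdF : lE f ∈ bdF f := by simp [bdF]
@[simp] lemma rE_mem_bdF : rE f ∈ bdF f := by simp [bdF]

lemma bE_ne_tE : bE f ≠ tE f := by simp [bE, tE, Prod.ext_iff]

lemma lE_ne_rE : lE f ≠ rE f := by simp [lE, rE, Prod.ext_iff]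

lemma oppE_mem_bdF (e : DEdge) : oppE f e ∈ bdF f := by
  unfold oppE
  split_ifs <;> simp

lemma dInd_inter_bdF {ξ : Set DEdge} {e : DEdge} (he : e ∈ bdF f) :
    dInd (ξ ∩ bdF f) e = dInd ξ e := by
  classical
  simp [dInd, Set.indicator_apply, he]

end Face

lemma not_isEvenFace_below {k : ℤ} {f : ℤ × ℤ} (hf : IsEvenFace k f) :
    ¬ IsEvenFace k (f.1, f.2 - 1) := by
  unfold IsEvenFace at *
  omega

lemma eq_of_mem_bdF_of_isEvenFace {k : ℤ} {f g : ℤ × ℤ} {e : DEdge}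
    (hf : IsEvenFace k f) (hg : IsEvenFace k g) (hef : e ∈ bdF f) (heg : e ∈ bdF g) :
    f = g := by
  obtain ⟨i, j⟩ := f
  obtain ⟨i', j'⟩ := g
  unfold IsEvenFace at hf hg
  dsimp only at hf hg
  simp only [bdF, Set.mem_insert_iff, Set.mem_singleton_iff] at hef heg
  rcases hef with rfl | rfl | rfl | rfl <;> rcases heg with h | h | h | h <;>
    simp only [bE, tE, lE, rE, Prod.mk.injEq, Bool.true_eq_false, Bool.false_eq_true,
      and_false] at h <;> (rw [Prod.ext_iff]; omega)

section Shuffle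

variable {k : ℤ} {c : ℤ × ℤ → Bool} {η : Set DEdge} {f : ℤ × ℤ}

lemma mem_shuffle_iff (hf : IsEvenFace k f) {e : DEdge} (he : e ∈ bdF f) :
    e ∈ shuffle k c η ↔
      (η ∩ bdF f = ∅ ∧ (if c f then e = tE f ∨ e = bE f else e = lE f ∨ e = rE f)) ∨
        ∃ e₀, η ∩ bdF f = {e₀} ∧ e = oppE f e₀ := by
  refine ⟨fun ⟨g, hg, heg, hcond⟩ => ?_, fun hcond => ⟨f, hf, he, hcond⟩⟩
  rwa [eq_of_mem_bdF_of_isEvenFace hg hf heg he] at hcond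

lemma shuffle_inter_bdF_of_empty (hf : IsEvenFace k f) (h : η ∩ bdF f = ∅) :
    shuffle k c η ∩ bdF f = if c f then {tE f, bE f} else {lE f, rE f} := by
  ext e
  by_cases he : e ∈ bdF f
  · rw [Set.mem_inter_iff, mem_shuffle_iff hf he, h]
    split_ifs <;> simp [he]
  · split_ifs <;> simp_all [bdF]

lemma shuffle_inter_bdF_of_eq_singleton (hf : IsEvenFace k f) {e₀ : DEdge}
    (h : η ∩ bdF f = {e₀}) : shuffle k c η ∩ bdF f = {oppE f e₀} := by
  ext e
  by_cases he : e ∈ bdF f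
  · rw [Set.mem_inter_iff, mem_shuffle_iff hf he, h]
    simp [he]
  · simp only [Set.mem_inter_iff, he, and_false, Set.mem_singleton_iff, false_iff]
    rintro rfl
    exact he (oppE_mem_bdF f e₀)

lemma shuffle_inter_bdF_of_nontrivial (hf : IsEvenFace k f) (h : (η ∩ bdF f).Nontrivial) :
    shuffle k c η ∩ bdF f = ∅ := by
  refine Set.eq_empty_of_forall_notMem fun e ⟨he', he⟩ => ?_
  rcases (mem_shuffle_iff hf he).mp he' with ⟨h₀, -⟩ | ⟨e₀, h₀, -⟩
  · exact h.nonempty.ne_empty h₀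
  · exact h.not_subsingleton (h₀ ▸ Set.subsingleton_singleton)

end Shuffle

section DimerCover

variable {η : Set DEdge}

lemma IsDimerCover.eq_of_mem (hη : IsDimerCover η) {v : Vtx} {e₁ e₂ : DEdge}
    (h₁ : e₁ ∈ η) (h₂ : e₂ ∈ η) (hv₁ : v = e₁.1 ∨ v = e₁.1 + edir e₁.2)
    (hv₂ : v = e₂.1 ∨ v = e₂.1 + edir e₂.2) : e₁ = e₂ :=
  (hη v).unique ⟨h₁, hv₁⟩ ⟨h₂, hv₂⟩

lemma IsDimerCover.inter_bdF_subset (hη : IsDimerCover η) (f : ℤ × ℤ) :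
    η ∩ bdF f ⊆ {bE f, tE f} ∨ η ∩ bdF f ⊆ {lE f, rE f} := by
  by_contra! ⟨hH, hV⟩
  obtain ⟨x, ⟨hxη, hx⟩, hxH⟩ := Set.not_subset.mp hH
  obtain ⟨y, ⟨hyη, hy⟩, hyV⟩ := Set.not_subset.mp hV
  -- a vertical and a horizontal boundary edge of `f` meet at the corner `(x.1.1, y.1.2)`
  have hxy := hη.eq_of_mem hxη hyη (v := (x.1.1, y.1.2))
  simp only [bdF, Set.mem_insert_iff, Set.mem_singleton_iff] at hx hy hxH hyV
  rcases hx with rfl | rfl | rfl | rfl <;> rcases hy with rfl | rfl | rfl | rfl <;>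
    simp [bE, tE, lE, rE, edir, Prod.ext_iff] at hxy hxH hyV

lemma IsDimerCover.inter_bdF_cases (hη : IsDimerCover η) (f : ℤ × ℤ) :
    η ∩ bdF f = ∅ ∨ (∃ e₀, η ∩ bdF f = {e₀}) ∨
      η ∩ bdF f = {bE f, tE f} ∨ η ∩ bdF f = {lE f, rE f} := by
  rcases hη.inter_bdF_subset f with h | h <;>
    rcases Set.subset_pair_iff_eq.mp h with h | h | h | h <;> simp [h]

theorem IsDimerCover.exists_dInd_add_dInd_shuffle_eq (hη : IsDimerCover η) {k : ℤ}
    {c : ℤ × ℤ → Bool} {f : ℤ × ℤ} (hf : IsEvenFace k f) :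
    ∃ o : Bool, ∀ e ∈ bdF f, dInd η e + dInd (shuffle k c η) e = if e.2 = o then 1 else 0 := by
  suffices ∃ o : Bool, ∀ e ∈ bdF f,
      dInd (η ∩ bdF f) e + dInd (shuffle k c η ∩ bdF f) e = if e.2 = o then 1 else 0 by
    obtain ⟨o, ho⟩ := this
    exact ⟨o, fun e he => by simpa only [dInd_inter_bdF f he] using ho e he⟩
  rcases hη.inter_bdF_cases f with h | ⟨e₀, h⟩ | h | h
  · refine ⟨c f, fun e he => ?_⟩
    rw [shuffle_inter_bdF_of_empty hf h, h]
    simp only [bdF, Set.mem_insert_iff, Set.mem_singleton_iff] at he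
    rcases he with rfl | rfl | rfl | rfl <;> cases c f <;>
      simp [dInd, bE, tE, lE, rE, Prod.ext_iff]
  · have he₀ : e₀ ∈ bdF f := (h.symm ▸ Set.mem_singleton e₀ : e₀ ∈ η ∩ bdF f).2
    refine ⟨e₀.2, fun e he => ?_⟩
    rw [shuffle_inter_bdF_of_eq_singleton hf h, h]
    simp only [bdF, Set.mem_insert_iff, Set.mem_singleton_iff] at he he₀
    rcases he with rfl | rfl | rfl | rfl <;> rcases he₀ with rfl | rfl | rfl | rfl <;>
      simp [dInd, oppE, bE, tE, lE, rE, Prod.ext_iff]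
  · refine ⟨true, fun e he => ?_⟩
    rw [shuffle_inter_bdF_of_nontrivial hf (h ▸ Set.nontrivial_pair (bE_ne_tE f)), h]
    simp only [bdF, Set.mem_insert_iff, Set.mem_singleton_iff] at he
    rcases he with rfl | rfl | rfl | rfl <;> simp [dInd, bE, tE, lE, rE, Prod.ext_iff]
  · refine ⟨false, fun e he => ?_⟩
    rw [shuffle_inter_bdF_of_nontrivial hf (h ▸ Set.nontrivial_pair (lE_ne_rE f)), h]
    simp only [bdF, Set.mem_insert_iff, Set.mem_singleton_iff] at he
    rcases he with rfl | rfl | rfl | rfl <;> simp [dInd, bE, tE, lE, rE, Prod.ext_iff]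

end DimerCover

section Height

variable {k : ℤ} {ξ : Set DEdge} {h : ℤ × ℤ → ℝ}

lemma IsHeightAt.sub_below (hh : IsHeightAt k ξ h) (f : ℤ × ℤ) :
    h f - h (f.1, f.2 - 1) = sgnW k (f.1 + (f.2 - 1)) * (dInd ξ (bE f) - 1 / 4) := by
  have hadj : Adj (f.1, f.2 - 1) f := Or.inr (Or.inr (Or.inl (by simp)))
  rw [hh _ _ hadj, inc, if_neg (by rw [Prod.ext_iff]; omega),
    if_neg (by rw [Prod.ext_iff]; omega), if_pos (by simp), sub_add_cancel]
  rfl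

lemma IsHeightAt.sub_eq_of_eq_below {ξ' : Set DEdge} {h' : ℤ × ℤ → ℝ}
    (hh : IsHeightAt k ξ h) (hh' : IsHeightAt (k + 1) ξ' h') {f : ℤ × ℤ} (hf : IsEvenFace k f)
    (hbelow : h' (f.1, f.2 - 1) = h (f.1, f.2 - 1)) :
    h' f - h f = dInd ξ (bE f) + dInd ξ' (bE f) - 1 / 2 := by
  unfold IsEvenFace at hf
  have hξ := hh.sub_below f
  have hξ' := hh'.sub_below f
  rw [sgnW, if_neg (by omega)] at hξ
  rw [sgnW, if_pos (by omega)] at hξ'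
  linarith

end Height

/-- let `η` be a dimer covering, `T = shuffle k c`, `h` a height function of
`η` at time `k` and `h'` a height function of `T(η)` at time `k + 1` normalized by
`h' = h` at every face odd at time `k`.  Then at every face `f` even at time `k`,
`h'(f) − h(f) = (H[η] + H[T(η)] − V[η] − V[T(η)])/4`. -/
theorem stmt_16 (η : Set DEdge) (hη : IsDimerCover η) (k : ℤ) (c : ℤ × ℤ → Bool)
    (h h' : ℤ × ℤ → ℝ)
    (hh : IsHeightAt k η h) (hh' : IsHeightAt (k + 1) (shuffle k c η) h')
    (hnorm : ∀ g : ℤ × ℤ, ¬ IsEvenFace k g → h' g = h g) :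
    ∀ f : ℤ × ℤ, IsEvenFace k f →
      h' f - h f = (Hcount η f + Hcount (shuffle k c η) f
        - Vcount η f - Vcount (shuffle k c η) f) / 4 := by
  intro f hf
  set η' := shuffle k c η
  rw [hh.sub_eq_of_eq_below hh' hf (hnorm _ (not_isEvenFace_below hf))]
  obtain ⟨o, ho⟩ := hη.exists_dInd_add_dInd_shuffle_eq (c := c) hf
  have hb : dInd η (bE f) + dInd η' (bE f) = if true = o then 1 else 0 := ho _ (bE_mem_bdF f)
  have ht : dInd η (tE f) + dInd η' (tE f) = if true = o then 1 else 0 := ho _ (tE_mem_bdF f)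
  have hl : dInd η (lE f) + dInd η' (lE f) = if false = o then 1 else 0 := ho _ (lE_mem_bdF f)
  have hr : dInd η (rE f) + dInd η' (rE f) = if false = o then 1 else 0 := ho _ (rE_mem_bdF f)
  simp only [Hcount, Vcount]
  cases o <;> simp only [Bool.false_eq_true, Bool.true_eq_false, ↓reduceIte] at hb ht hl hr <;>
    linarith
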